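/- For every ground term t over an orthogonal program P = (D, C, R): ⟨∅, t⟩ ⇓^m ⟨C, v⟩ holds for some cost m ∈ ℕ and some cache C if and only if t ⇓ v holds in the standard call-by-value big-step semantics. -/

import Mathlib

namespace Memo

/-! ### Terms over a program signature -/

/-- Terms over operation symbols `Op`, constructors `Con` and variables `V`. -/
inductive Tm (Op Con V : Type) : Type
  | var : V → Tm Op Con V
  | op  : Op → List (Tm Op Con V) → Tm Op Con V
  | con : Con → List (Tm Op Con V) → Tm Op Con V

namespace Tm
variable {Op Con V : Type}

/-- Substitution. -/
def subst (σ : V → Tm Op Con V) : Tm Op Con V → Tm Op Con V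
  | .var x => σ x
  | .op f ts => .op f (ts.attach.map fun t => subst σ t.1)
  | .con c ts => .con c (ts.attach.map fun t => subst σ t.1)
decreasing_by
  all_goals simp_wf
  all_goals (have := List.sizeOf_lt_of_mem t.2; omega)

/-- The size `|t|` of a term (number of symbols). -/
def size : Tm Op Con V → ℕ
  | .var _ => 1
  | .op _ ts => 1 + (ts.attach.map fun t => size t.1).sum
  | .con _ ts => 1 + (ts.attach.map fun t => size t.1).sum
decreasing_by
  all_goals simp_wf
  all_goals (have := List.sizeOf_lt_of_mem t.2; omega)

/-- Number of occurrences of the variable `x` in a term. -/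
def varCount [DecidableEq V] (x : V) : Tm Op Con V → ℕ
  | .var y => if y = x then 1 else 0
  | .op _ ts => (ts.attach.map fun t => varCount x t.1).sum
  | .con _ ts => (ts.attach.map fun t => varCount x t.1).sum
decreasing_by
  all_goals simp_wf
  all_goals (have := List.sizeOf_lt_of_mem t.2; omega)

end Tm

/-- Values: ground constructor terms. -/
inductive IsValue {Op Con V : Type} : Tm Op Con V → Prop
  | con {c : Con} {ts} : (∀ t ∈ ts, IsValue t) → IsValue (.con c ts)

/-- Ground terms: terms without variables. -/
inductive Ground {Op Con V : Type} : Tm Op Con V → Prop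
  | op {f : Op} {ts} : (∀ t ∈ ts, Ground t) → Ground (.op f ts)
  | con {c : Con} {ts} : (∀ t ∈ ts, Ground t) → Ground (.con c ts)

/-- Patterns: terms built from constructors and variables only. -/
inductive IsPattern {Op Con V : Type} : Tm Op Con V → Prop
  | var (x : V) : IsPattern (.var x)
  | con {c : Con} {ts} : (∀ t ∈ ts, IsPattern t) → IsPattern (.con c ts)

/-- The variable `x` occurs in the given term. -/
inductive VarIn {Op Con V : Type} (x : V) : Tm Op Con V → Prop
  | var : VarIn x (.var x)
  | op {f : Op} {ts t} : t ∈ ts → VarIn x t → VarIn x (.op f ts)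
  | con {c : Con} {ts t} : t ∈ ts → VarIn x t → VarIn x (.con c ts)

/-! ### Programs -/

/-- A rewrite rule `f(p₁,…,pₖ) → r`. -/
structure Rule (Op Con V : Type) where
  lhsOp : Op
  lhsArgs : List (Tm Op Con V)
  rhs : Tm Op Con V

/-- A program: a finite set (list) of rewrite rules. -/
structure Prog (Op Con V : Type) where
  rules : List (Rule Op Con V)

/-- Well-formed rule: left-hand side arguments are patterns and all variables of the
right-hand side occur in the left-hand side. -/
def WFRule {Op Con V : Type} (r : Rule Op Con V) : Prop :=
  (∀ p ∈ r.lhsArgs, IsPattern p) ∧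
  (∀ x, VarIn x r.rhs → ∃ p ∈ r.lhsArgs, VarIn x p)

/-- Left-linearity: every variable occurs at most once in the left-hand side. -/
def LeftLinear {Op Con V : Type} [DecidableEq V] (r : Rule Op Con V) : Prop :=
  ∀ x : V, (r.lhsArgs.map (Tm.varCount x)).sum ≤ 1

/-- Non-ambiguity: no two rules have overlapping left-hand sides. -/
def NonAmbiguous {Op Con V : Type} (P : Prog Op Con V) : Prop :=
  ∀ r1 ∈ P.rules, ∀ r2 ∈ P.rules, r1.lhsOp = r2.lhsOp →
    ∀ σ1 σ2 : V → Tm Op Con V,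
      r1.lhsArgs.map (Tm.subst σ1) = r2.lhsArgs.map (Tm.subst σ2) → r1 = r2

/-- Orthogonal program: well-formed, left-linear and non-ambiguous. -/
def Orthogonal {Op Con V : Type} [DecidableEq V] (P : Prog Op Con V) : Prop :=
  (∀ r ∈ P.rules, WFRule r ∧ LeftLinear r) ∧ NonAmbiguous P

/-! ### Standard call-by-value big-step semantics (Figure 3) -/

mutual
/-- `Eval P t v`: the term `t` reduces to the value `v`. -/
inductive Eval {Op Con V : Type} (P : Prog Op Con V) : Tm Op Con V → Tm Op Con V → Prop
  | con {c : Con} {ts vs} : EvalList P ts vs → Eval P (.con c ts) (.con c vs)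
  | split {f : Op} {ts vs v} : EvalList P ts vs → Eval P (.op f vs) v →
      Eval P (.op f ts) v
  | apply {f : Op} {vs r σ v} : (∀ u ∈ vs, IsValue u) → r ∈ P.rules → r.lhsOp = f →
      vs = r.lhsArgs.map (Tm.subst σ) → Eval P (Tm.subst σ r.rhs) v →
      Eval P (.op f vs) v

/-- Left-to-right evaluation of a list of terms. -/
inductive EvalList {Op Con V : Type} (P : Prog Op Con V) :
    List (Tm Op Con V) → List (Tm Op Con V) → Prop
  | nil : EvalList P [] []
  | cons {t v ts vs} : Eval P t v → EvalList P ts vs → EvalList P (t :: ts) (v :: vs)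
end

/-! ### Cost-annotated big-step semantics with memoization (Figure 4) -/

/-- A cache: a set of pairs of a function call on values and its result value. -/
abbrev TCache (Op Con V : Type) := Set (Op × List (Tm Op Con V) × Tm Op Con V)

mutual
/-- `MEval P C₀ t m C₁ v`: starting with cache `C₀` the term `t` reduces to the value `v`
with updated cache `C₁` at cost `m` (number of non-tabulated function applications). -/
inductive MEval {Op Con V : Type} (P : Prog Op Con V) :
    TCache Op Con V → Tm Op Con V → ℕ → TCache Op Con V → Tm Op Con V → Prop
  | con {C0 C1 : TCache Op Con V} {c : Con} {ts m vs} :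
      MEvalList P C0 ts m C1 vs →
      MEval P C0 (.con c ts) m C1 (.con c vs)
  | split {C0 C1 C2 : TCache Op Con V} {f : Op} {ts m vs n v} :
      MEvalList P C0 ts m C1 vs →
      MEval P C1 (.op f vs) n C2 v →
      MEval P C0 (.op f ts) (n + m) C2 v
  | read {C : TCache Op Con V} {f : Op} {vs v} :
      (∀ u ∈ vs, IsValue u) → (f, vs, v) ∈ C →
      MEval P C (.op f vs) 0 C v
  | update {C C' : TCache Op Con V} {f : Op} {vs r σ m v} :
      (∀ u ∈ vs, IsValue u) → (∀ u, (f, vs, u) ∉ C) →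
      r ∈ P.rules → r.lhsOp = f → vs = r.lhsArgs.map (Tm.subst σ) →
      MEval P C (Tm.subst σ r.rhs) m C' v →
      MEval P C (.op f vs) (m + 1) (insert (f, vs, v) C') v

/-- Left-to-right evaluation of a list of terms, threading the cache and summing costs. -/
inductive MEvalList {Op Con V : Type} (P : Prog Op Con V) :
    TCache Op Con V → List (Tm Op Con V) → ℕ → TCache Op Con V → List (Tm Op Con V) → Prop
  | nil {C : TCache Op Con V} : MEvalList P C [] 0 C []
  | cons {C0 C1 C2 : TCache Op Con V} {t m v ts n vs} :
      MEval P C0 t m C1 v → MEvalList P C1 ts n C2 vs →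
      MEvalList P C0 (t :: ts) (m + n) C2 (v :: vs)
end

/-! ### Heaps -/

/-- Locations. -/
abbrev Loc := ℕ

/-- A heap: a (partial) map from locations to constructors applied to locations,
i.e. a term graph over the constructors whose nodes are locations. -/
abbrev Heap (Con : Type) := Loc → Option (Con × List Loc)

/-- Domain (set of nodes) of a heap. -/
def heapDom {Con : Type} (h : Heap Con) : Set Loc := {l | h l ≠ none}

/-- A heap is maximally shared if equally labeled locations coincide. -/
def MaxShared {Con : Type} (h : Heap Con) : Prop :=
  ∀ l1 l2 c ls, h l1 = some (c, ls) → h l2 = some (c, ls) → l1 = l2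

/-- All successors of heap nodes are again heap nodes. -/
def HeapClosed {Con : Type} (h : Heap Con) : Prop :=
  ∀ l c ls, h l = some (c, ls) → ∀ l' ∈ ls, l' ∈ heapDom h

/-- `HUnfolds h l v`: the value `v` is stored at location `l`, i.e. `v = [l]_h` is
obtained by unfolding the heap `h` starting from location `l`. -/
inductive HUnfolds {Op Con V : Type} (h : Heap Con) : Loc → Tm Op Con V → Prop
  | mk {l : Loc} {c ls ts} : h l = some (c, ls) → ls.length = ts.length →
      (∀ (i : ℕ) l' t, ls[i]? = some l' → ts[i]? = some t → HUnfolds h l' t) →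
      HUnfolds h l (.con c ts)

/-- `merge(h, c(ℓ⃗)) = (h', ℓ)`: extension of the heap `h` by `c(ℓ⃗)` retaining maximal
sharing; an existing location is reused if possible, otherwise the first fresh location
is used. -/
inductive Merge {Con : Type} (h : Heap Con) (c : Con) (ls : List Loc) : Heap Con → Loc → Prop
  | reuse {l : Loc} : h l = some (c, ls) → Merge h c ls h l
  | fresh {l : Loc} : (∀ l', h l' ≠ some (c, ls)) → h l = none →
      (∀ l' < l, h l' ≠ none) →
      Merge h c ls (Function.update h l (some (c, ls))) l

/-! ### Expressions, evaluation contexts and configurations -/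

/-- Expressions: terms extended with locations and markers `f⟨ℓ⃗⟩{e}`. -/
inductive Expr (Op Con : Type) : Type
  | loc : Loc → Expr Op Con
  | op : Op → List (Expr Op Con) → Expr Op Con
  | con : Con → List (Expr Op Con) → Expr Op Con
  | marked : Op → List Loc → Expr Op Con → Expr Op Con

/-- Value expressions: built from constructors and locations only. -/
inductive IsValExpr {Op Con : Type} : Expr Op Con → Prop
  | loc (l : Loc) : IsValExpr (.loc l)
  | con {c : Con} {es} : (∀ e ∈ es, IsValExpr e) → IsValExpr (.con c es)

/-- Evaluation contexts: a unique hole, with only locations to the left of the hole. -/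
inductive Ctx (Op Con : Type) : Type
  | hole : Ctx Op Con
  | marked : Op → List Loc → Ctx Op Con → Ctx Op Con
  | op : Op → List Loc → Ctx Op Con → List (Expr Op Con) → Ctx Op Con
  | con : Con → List Loc → Ctx Op Con → List (Expr Op Con) → Ctx Op Con

/-- Plugging an expression into the hole of an evaluation context. -/
def Ctx.plug {Op Con : Type} : Ctx Op Con → Expr Op Con → Expr Op Con
  | .hole, e => e
  | .marked f ls E, e => .marked f ls (E.plug e)
  | .op f ls E es, e => .op f (ls.map Expr.loc ++ E.plug e :: es)
  | .con c ls E es, e => .con c (ls.map Expr.loc ++ E.plug e :: es)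

/-- A cache over locations. -/
abbrev HCache (Op : Type) := Set (Op × List Loc × Loc)

/-- Configurations: a cache, a heap and an expression. -/
abbrev Config (Op Con : Type) := HCache Op × Heap Con × Expr Op Con

/-- Instantiation of a term by a substitution mapping variables to locations,
yielding an expression. -/
def instE {Op Con V : Type} (σ : V → Loc) : Tm Op Con V → Expr Op Con
  | .var x => .loc (σ x)
  | .op f ts => .op f (ts.attach.map fun t => instE σ t.1)
  | .con c ts => .con c (ts.attach.map fun t => instE σ t.1)
decreasing_by
  all_goals simp_wf
  all_goals (have := List.sizeOf_lt_of_mem t.2; omega)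

/-- `PMatch h σ p l`: the pattern `p` matches the value stored at location `l` of the
heap `h`, binding the variables of `p` to locations according to `σ`.  This captures
matching via a homomorphism from the canonical tree of `p` into the heap, `σ` being the
induced substitution. -/
inductive PMatch {Op Con V : Type} (h : Heap Con) (σ : V → Loc) : Tm Op Con V → Loc → Prop
  | var {x l} : σ x = l → PMatch h σ (.var x) l
  | con {c : Con} {ps l ls} : h l = some (c, ls) → ps.length = ls.length →
      (∀ (i : ℕ) p l', ps[i]? = some p → ls[i]? = some l' → PMatch h σ p l') →
      PMatch h σ (.con c ps) l

/-! ### Small-step semantics with memoization and sharing (Figure 6) -/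

/-- The (apply) step. -/
inductive ApplyStep {Op Con V : Type} (P : Prog Op Con V) : Config Op Con → Config Op Con → Prop
  | mk {C : HCache Op} {h : Heap Con} {E : Ctx Op Con} {f ls r σ} :
      (∀ l, (f, ls, l) ∉ C) →
      r ∈ P.rules → r.lhsOp = f →
      r.lhsArgs.length = ls.length →
      (∀ (i : ℕ) p l, r.lhsArgs[i]? = some p → ls[i]? = some l → PMatch h σ p l) →
      ApplyStep P (C, h, E.plug (.op f (ls.map Expr.loc)))
        (C, h, E.plug (.marked f ls (instE σ r.rhs)))

/-- The (read) step. -/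
inductive ReadStep {Op Con : Type} : Config Op Con → Config Op Con → Prop
  | mk {C : HCache Op} {h : Heap Con} {E : Ctx Op Con} {f ls l} :
      (f, ls, l) ∈ C →
      ReadStep (C, h, E.plug (.op f (ls.map Expr.loc))) (C, h, E.plug (.loc l))

/-- The (store) step. -/
inductive StoreStep {Op Con : Type} : Config Op Con → Config Op Con → Prop
  | mk {C : HCache Op} {h : Heap Con} {E : Ctx Op Con} {f ls l} :
      StoreStep (C, h, E.plug (.marked f ls (.loc l)))
        (insert (f, ls, l) C, h, E.plug (.loc l))

/-- The (merge) step. -/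
inductive MergeStep {Op Con : Type} : Config Op Con → Config Op Con → Prop
  | mk {C : HCache Op} {h h' : Heap Con} {E : Ctx Op Con} {c ls l} :
      Merge h c ls h' l →
      MergeStep (C, h, E.plug (.con c (ls.map Expr.loc))) (C, h', E.plug (.loc l))

/-- `→sm`: read, store or merge. -/
def SmStep {Op Con : Type} : Config Op Con → Config Op Con → Prop :=
  fun a b => ReadStep a b ∨ StoreStep a b ∨ MergeStep a b

/-- `⇒`: apply, read, store or merge. -/
def Step {Op Con V : Type} (P : Prog Op Con V) : Config Op Con → Config Op Con → Prop :=
  fun a b => ApplyStep P a b ∨ SmStep a b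

/-- n-fold composition of `⇒`. -/
def StepN {Op Con V : Type} (P : Prog Op Con V) : ℕ → Config Op Con → Config Op Con → Prop
  | 0 => fun a b => a = b
  | n + 1 => fun a c => ∃ b, Step P a b ∧ StepN P n b c

/-- `→sm*`. -/
def SmSteps {Op Con : Type} : Config Op Con → Config Op Con → Prop :=
  Relation.ReflTransGen SmStep

/-- `⇛ = →sm* · ⇀ · →sm*`. -/
def MacroStep {Op Con V : Type} (P : Prog Op Con V) : Config Op Con → Config Op Con → Prop :=
  fun a d => ∃ b c, SmSteps a b ∧ ApplyStep P b c ∧ SmSteps c d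

/-- `⇛^m`, the m-fold composition of `⇛`: a reduction containing exactly `m` apply steps. -/
def MacroStepN {Op Con V : Type} (P : Prog Op Con V) : ℕ → Config Op Con → Config Op Con → Prop
  | 0 => fun a b => a = b
  | n + 1 => fun a c => ∃ b, MacroStep P a b ∧ MacroStepN P n b c

/-! ### Well-formed configurations -/

/-- A marker `f⟨ℓ⃗⟩{·}` occurs somewhere in the given expression. -/
inductive MarkedIn {Op Con : Type} (f : Op) (ls : List Loc) : Expr Op Con → Prop
  | here {e} : MarkedIn f ls (.marked f ls e)
  | op {g es e} : e ∈ es → MarkedIn f ls e → MarkedIn f ls (.op g es)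
  | con {c es e} : e ∈ es → MarkedIn f ls e → MarkedIn f ls (.con c es)
  | marked {g ls' e} : MarkedIn f ls e → MarkedIn f ls (.marked g ls' e)

/-- The location `l` occurs in the given expression. -/
inductive LocInExpr {Op Con : Type} (l : Loc) : Expr Op Con → Prop
  | loc : LocInExpr l (.loc l)
  | op {f es e} : e ∈ es → LocInExpr l e → LocInExpr l (.op f es)
  | con {c es e} : e ∈ es → LocInExpr l e → LocInExpr l (.con c es)
  | markedArg {f ls e} : l ∈ ls → LocInExpr l (.marked f ls e)
  | markedBody {f ls e} : LocInExpr l e → LocInExpr l (.marked f ls e)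

/-- Well-formed configurations: the heap is a maximally shared term graph, the cache is a
function compatible with the expression, and there are no dangling locations. -/
def WF {Op Con : Type} (cfg : Config Op Con) : Prop :=
  MaxShared cfg.2.1 ∧ HeapClosed cfg.2.1 ∧
  (∀ f ls l1 l2, (f, ls, l1) ∈ cfg.1 → (f, ls, l2) ∈ cfg.1 → l1 = l2) ∧
  (∀ f ls, MarkedIn f ls cfg.2.2 → ∀ l, (f, ls, l) ∉ cfg.1) ∧
  (∀ f ls l, (f, ls, l) ∈ cfg.1 → l ∈ heapDom cfg.2.1 ∧ ∀ l' ∈ ls, l' ∈ heapDom cfg.2.1) ∧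
  (∀ l, LocInExpr l cfg.2.2 → l ∈ heapDom cfg.2.1)

/-! ### Unfolding of expressions and caches -/

/-- `EUnfolds h e t`: the term `t = [e]_h` is obtained from `e` by following pointers to
the heap and erasing markers. -/
inductive EUnfolds {Op Con V : Type} (h : Heap Con) : Expr Op Con → Tm Op Con V → Prop
  | loc {l t} : HUnfolds h l t → EUnfolds h (.loc l) t
  | op {f : Op} {es ts} : es.length = ts.length →
      (∀ (i : ℕ) e t, es[i]? = some e → ts[i]? = some t → EUnfolds h e t) →
      EUnfolds h (.op f es) (.op f ts)
  | con {c : Con} {es ts} : es.length = ts.length →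
      (∀ (i : ℕ) e t, es[i]? = some e → ts[i]? = some t → EUnfolds h e t) →
      EUnfolds h (.con c es) (.con c ts)
  | marked {f ls e t} : EUnfolds h e t → EUnfolds h (.marked f ls e) t

/-- `[C]_h`: the unfolding of a location cache into a term cache. -/
def cacheUnfold {Op Con : Type} (V : Type) (h : Heap Con) (C : HCache Op) :
    TCache Op Con V :=
  {x | ∃ ls l, (x.1, ls, l) ∈ C ∧ ls.length = x.2.1.length ∧
    (∀ (i : ℕ) l' t, ls[i]? = some l' → x.2.1[i]? = some t → HUnfolds h l' t) ∧
    HUnfolds h l x.2.2}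

/-- An initial configuration: empty cache, maximally shared heap without dangling
locations, and an expression `f(v₁,…,vₖ)` whose arguments are value expressions. -/
def InitialConf {Op Con : Type} (h : Heap Con) (e : Expr Op Con) : Prop :=
  MaxShared h ∧ HeapClosed h ∧ (∀ l, LocInExpr l e → l ∈ heapDom h) ∧
  ∃ (f : Op) (es : List (Expr Op Con)), e = .op f es ∧ ∀ e' ∈ es, IsValExpr e'

/-! ### Sizes and weights -/

/-- The size `|e|` of an expression: every symbol and location counts one. -/
def exprSize {Op Con : Type} : Expr Op Con → ℕ
  | .loc _ => 1
  | .op _ es => 1 + (es.attach.map fun e => exprSize e.1).sum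
  | .con _ es => 1 + (es.attach.map fun e => exprSize e.1).sum
  | .marked _ _ e => 1 + exprSize e
decreasing_by
  all_goals simp_wf
  all_goals (have := List.sizeOf_lt_of_mem e.2; omega)

/-- The weight `‖e‖` of an expression: like the size, but locations count zero. -/
def weight {Op Con : Type} : Expr Op Con → ℕ
  | .loc _ => 0
  | .op _ es => 1 + (es.attach.map fun e => weight e.1).sum
  | .con _ es => 1 + (es.attach.map fun e => weight e.1).sum
  | .marked _ _ e => 1 + weight e
decreasing_by
  all_goals simp_wf
  all_goals (have := List.sizeOf_lt_of_mem e.2; omega)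

/-- `Δ`, the maximal size of a right-hand side of the program. -/
def progDelta {Op Con V : Type} (P : Prog Op Con V) : ℕ :=
  (P.rules.map fun r => r.rhs.size).foldr max 1

/-- The size of a configuration: cardinality of the cache plus number of heap nodes plus
size of the expression. -/
noncomputable def confSize {Op Con : Type} (cfg : Config Op Con) : ℕ :=
  cfg.1.ncard + (heapDom cfg.2.1).ncard + exprSize cfg.2.2

open Classical in
/-- The number of apply steps along a list of configurations. -/
noncomputable def applyCount {Op Con V : Type} (P : Prog Op Con V) :
    List (Config Op Con) → ℕ
  | [] => 0
  | [_] => 0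
  | a :: b :: rest => (if ApplyStep P a b then 1 else 0) + applyCount P (b :: rest)

end Memo

namespace Memo

/-!
Call a cache sound if every entry `(f(v⃗), v)` satisfies `f(v⃗) ⇓ v`. A memoized derivation
from a sound cache erases to a standard derivation and ends in a sound cache, since each `Read`
is justified by the cache and each `Update` records a call it has just evaluated. Conversely,
a standard derivation can be replayed from any sound cache: on a cache hit the stored result is
the right one because orthogonal programs are deterministic, a redex having a unique
contractum when left-hand sides do not overlap. The empty cache is sound.
-/

variable {Op Con V : Type}

namespace Tm

@[simp] theorem subst_var (σ : V → Tm Op Con V) (x : V) : subst σ (.var x) = σ x := by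
  simp [subst]

@[simp] theorem subst_op (σ : V → Tm Op Con V) (f : Op) (ts : List (Tm Op Con V)) :
    subst σ (.op f ts) = .op f (ts.map (subst σ)) := by
  simp [subst]

@[simp] theorem subst_con (σ : V → Tm Op Con V) (c : Con) (ts : List (Tm Op Con V)) :
    subst σ (.con c ts) = .con c (ts.map (subst σ)) := by
  simp [subst]

theorem subst_congr {σ₁ σ₂ : V → Tm Op Con V} :
    ∀ t : Tm Op Con V, (∀ x, VarIn x t → σ₁ x = σ₂ x) → subst σ₁ t = subst σ₂ t
  | .var x, h => by simpa using h x .var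
  | .op f ts, h => by
      simp only [subst_op, op.injEq, true_and, List.map_inj_left]
      exact fun t ht => subst_congr t fun x hx => h x (.op ht hx)
  | .con c ts, h => by
      simp only [subst_con, con.injEq, true_and, List.map_inj_left]
      exact fun t ht => subst_congr t fun x hx => h x (.con ht hx)
termination_by t => sizeOf t
decreasing_by all_goals (have := List.sizeOf_lt_of_mem ht; simp; omega)

end Tm

theorem IsPattern.eq_of_subst_eq {σ₁ σ₂ : V → Tm Op Con V} {p : Tm Op Con V}
    (hp : IsPattern p) (h : p.subst σ₁ = p.subst σ₂) : ∀ x, VarIn x p → σ₁ x = σ₂ x := by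
  induction hp with
  | var y => rintro x ⟨⟩; simpa using h
  | con _ ih =>
      rintro x (_ | _ | ⟨hmem, hx⟩)
      simp only [Tm.subst_con, Tm.con.injEq, List.map_inj_left] at h
      exact ih _ hmem (h.2 _ hmem) x hx

section Determinism

variable {P : Prog Op Con V}

theorem contractum_unique (hwf : ∀ r ∈ P.rules, WFRule r) (hna : NonAmbiguous P)
    {r₁ r₂ : Rule Op Con V} {σ₁ σ₂ : V → Tm Op Con V} (hr₁ : r₁ ∈ P.rules)
    (hr₂ : r₂ ∈ P.rules) (hop : r₁.lhsOp = r₂.lhsOp)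
    (hargs : r₁.lhsArgs.map (Tm.subst σ₁) = r₂.lhsArgs.map (Tm.subst σ₂)) :
    r₁.rhs.subst σ₁ = r₂.rhs.subst σ₂ := by
  obtain rfl := hna r₁ hr₁ r₂ hr₂ hop σ₁ σ₂ hargs
  obtain ⟨hpat, hvars⟩ := hwf r₁ hr₁
  refine Tm.subst_congr _ fun x hx => ?_
  obtain ⟨p, hp, hxp⟩ := hvars x hx
  exact (hpat p hp).eq_of_subst_eq (List.map_inj_left.mp hargs p hp) x hxp

mutual

theorem Eval.eq_of_isValue {t v : Tm Op Con V} : Eval P t v → IsValue t → v = t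
  | .con h, .con hts => congrArg _ (h.eq_of_forall_isValue hts)

theorem EvalList.eq_of_forall_isValue {ts vs : List (Tm Op Con V)} :
    EvalList P ts vs → (∀ t ∈ ts, IsValue t) → vs = ts
  | .nil, _ => rfl
  | .cons h hs, hts => by
      rw [h.eq_of_isValue (hts _ List.mem_cons_self),
        hs.eq_of_forall_isValue fun t ht => hts t (List.mem_cons_of_mem _ ht)]

end

theorem Eval.exists_rule_of_op_values {t v : Tm Op Con V} :
    Eval P t v → ∀ {f vs}, t = .op f vs → (∀ u ∈ vs, IsValue u) →
      ∃ r σ, r ∈ P.rules ∧ r.lhsOp = f ∧ vs = r.lhsArgs.map (Tm.subst σ) ∧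
        Eval P (r.rhs.subst σ) v
  | .split hl h, _, _, rfl, hvs => by
      obtain rfl := hl.eq_of_forall_isValue hvs
      exact h.exists_rule_of_op_values rfl hvs
  | .apply _ hr hop hargs h, _, _, rfl, _ => ⟨_, _, hr, hop, hargs, h⟩

mutual

theorem Eval.det (hwf : ∀ r ∈ P.rules, WFRule r) (hna : NonAmbiguous P)
    {t v₁ : Tm Op Con V} : Eval P t v₁ → ∀ {v₂}, Eval P t v₂ → v₁ = v₂
  | .con h₁, _, .con h₂ => congrArg _ (h₁.det hwf hna h₂)
  | .split hl₁ h₁, _, h₂ => by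
      cases h₂ with
      | split hl₂ h₂ =>
          obtain rfl := hl₁.det hwf hna hl₂
          exact h₁.det hwf hna h₂
      | apply hvs hr hop hargs h₂ =>
          obtain rfl := hl₁.eq_of_forall_isValue hvs
          exact h₁.det hwf hna (.apply hvs hr hop hargs h₂)
  | .apply hvs hr₁ hop₁ hargs₁ h₁, _, h₂ => by
      obtain ⟨r₂, σ₂, hr₂, hop₂, hargs₂, h₂⟩ := h₂.exists_rule_of_op_values rfl hvs
      rw [← contractum_unique hwf hna hr₁ hr₂ (hop₁.trans hop₂.symm)
        (hargs₁.symm.trans hargs₂)] at h₂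
      exact h₁.det hwf hna h₂

theorem EvalList.det (hwf : ∀ r ∈ P.rules, WFRule r) (hna : NonAmbiguous P)
    {ts vs₁ vs₂ : List (Tm Op Con V)} : EvalList P ts vs₁ → EvalList P ts vs₂ → vs₁ = vs₂
  | .nil, .nil => rfl
  | .cons h₁ hs₁, .cons h₂ hs₂ => by rw [h₁.det hwf hna h₂, hs₁.det hwf hna hs₂]

end

end Determinism

section Memoization

variable {P : Prog Op Con V}

def CacheSound (P : Prog Op Con V) (C : TCache Op Con V) : Prop :=
  ∀ f vs u, (f, vs, u) ∈ C → Eval P (.op f vs) u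

theorem cacheSound_empty : CacheSound P ∅ := fun _ _ _ h => absurd h (Set.notMem_empty _)

theorem CacheSound.insert {C : TCache Op Con V} {f : Op} {vs : List (Tm Op Con V)}
    {v : Tm Op Con V} (hC : CacheSound P C) (h : Eval P (.op f vs) v) :
    CacheSound P (insert (f, vs, v) C) := by
  rintro f' vs' u (heq | hmem)
  · cases heq
    exact h
  · exact hC f' vs' u hmem

mutual

theorem MEval.sound {C₀ C₁ : TCache Op Con V} {t v : Tm Op Con V} {m : ℕ} :
    MEval P C₀ t m C₁ v → CacheSound P C₀ → Eval P t v ∧ CacheSound P C₁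
  | .con hl, hC =>
      let ⟨hl, hC⟩ := hl.sound hC
      ⟨.con hl, hC⟩
  | .split hl h, hC =>
      let ⟨hl, hC⟩ := hl.sound hC
      let ⟨h, hC⟩ := h.sound hC
      ⟨.split hl h, hC⟩
  | .read _ hmem, hC => ⟨hC _ _ _ hmem, hC⟩
  | .update hvs _ hr hop hargs h, hC =>
      let ⟨h, hC⟩ := h.sound hC
      have happ := Eval.apply hvs hr hop hargs h
      ⟨happ, hC.insert happ⟩

theorem MEvalList.sound {C₀ C₁ : TCache Op Con V} {ts vs : List (Tm Op Con V)} {m : ℕ} :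
    MEvalList P C₀ ts m C₁ vs → CacheSound P C₀ → EvalList P ts vs ∧ CacheSound P C₁
  | .nil, hC => ⟨.nil, hC⟩
  | .cons h hs, hC =>
      let ⟨h, hC⟩ := h.sound hC
      let ⟨hs, hC⟩ := hs.sound hC
      ⟨.cons h hs, hC⟩

end

theorem exists_mEval_op_values (hwf : ∀ r ∈ P.rules, WFRule r) (hna : NonAmbiguous P)
    {f : Op} {vs : List (Tm Op Con V)} {r : Rule Op Con V} {σ : V → Tm Op Con V}
    {v : Tm Op Con V} {C₀ : TCache Op Con V} (hvs : ∀ u ∈ vs, IsValue u) (hr : r ∈ P.rules)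
    (hop : r.lhsOp = f) (hargs : vs = r.lhsArgs.map (Tm.subst σ))
    (h : Eval P (r.rhs.subst σ) v) (hC : CacheSound P C₀)
    (hbody : ∃ m C₁, MEval P C₀ (r.rhs.subst σ) m C₁ v ∧ CacheSound P C₁) :
    ∃ m C₁, MEval P C₀ (.op f vs) m C₁ v ∧ CacheSound P C₁ := by
  have happ : Eval P (.op f vs) v := .apply hvs hr hop hargs h
  by_cases hhit : ∃ u, (f, vs, u) ∈ C₀
  · obtain ⟨u, hu⟩ := hhit
    obtain rfl := (hC f vs u hu).det hwf hna happ
    exact ⟨0, C₀, .read hvs hu, hC⟩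
  · obtain ⟨m, C₁, hbody, hC₁⟩ := hbody
    exact ⟨m + 1, _, .update hvs (not_exists.mp hhit) hr hop hargs hbody, hC₁.insert happ⟩

mutual

theorem Eval.exists_mEval (hwf : ∀ r ∈ P.rules, WFRule r) (hna : NonAmbiguous P)
    {t v : Tm Op Con V} {C₀ : TCache Op Con V} :
    Eval P t v → CacheSound P C₀ → ∃ m C₁, MEval P C₀ t m C₁ v ∧ CacheSound P C₁
  | .con hl, hC =>
      let ⟨m, _, hl, hC⟩ := hl.exists_mEvalList hwf hna hC
      ⟨m, _, .con hl, hC⟩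
  | .split hl h, hC =>
      let ⟨m, _, hl, hC⟩ := hl.exists_mEvalList hwf hna hC
      let ⟨n, _, h, hC⟩ := h.exists_mEval hwf hna hC
      ⟨n + m, _, .split hl h, hC⟩
  | .apply hvs hr hop hargs h, hC =>
      exists_mEval_op_values hwf hna hvs hr hop hargs h hC (h.exists_mEval hwf hna hC)

theorem EvalList.exists_mEvalList (hwf : ∀ r ∈ P.rules, WFRule r) (hna : NonAmbiguous P)
    {ts vs : List (Tm Op Con V)} {C₀ : TCache Op Con V} :
    EvalList P ts vs → CacheSound P C₀ → ∃ m C₁, MEvalList P C₀ ts m C₁ vs ∧ CacheSound P C₁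
  | .nil, hC => ⟨0, C₀, .nil, hC⟩
  | .cons h hs, hC =>
      let ⟨m, _, h, hC⟩ := h.exists_mEval hwf hna hC
      let ⟨n, _, hs, hC⟩ := hs.exists_mEvalList hwf hna hC
      ⟨m + n, _, .cons h hs, hC⟩

end

end Memoization

/-- Lemma 4.  For every ground term `t` over an orthogonal program `P`:
`⟨∅, t⟩ ⇓^m ⟨C, v⟩` holds for some cost `m` and cache `C` if and only if `t ⇓ v` holds in
the standard call-by-value big-step semantics. -/
theorem statement2 {Op Con V : Type} [DecidableEq V] (P : Prog Op Con V)
    (hP : Orthogonal P) (t : Tm Op Con V) (ht : Ground t) (v : Tm Op Con V) :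
    (∃ (m : ℕ) (C : TCache Op Con V), MEval P ∅ t m C v) ↔ Eval P t v := by
  have hwf : ∀ r ∈ P.rules, WFRule r := fun r hr => (hP.1 r hr).1
  constructor
  · rintro ⟨m, C, h⟩
    exact (h.sound cacheSound_empty).1
  · intro h
    obtain ⟨m, C, h, -⟩ := h.exists_mEval hwf hP.2 cacheSound_empty
    exact ⟨m, C, h⟩

end Memo
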